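/- arXiv:1903.12383 — 4 statements merged into one kernel-verified Lean document; each statement's English description precedes it below -/
import Mathlib

section
/- If f is analytic on the unit disc, 1 < α < 2, and ‖f‖_{𝒵_α} = |f(0)| + |f'(0)| + sup_{z∈𝔻} (1-|z|²)^α |f''(z)| is finite, then for every z in the unit disc, |f(z)| ≤ (2/((α-1)(2-α))) · ‖f‖_{𝒵_α}. -/
open Metric MeasureTheory

lemma seg_norm_le (g : ℂ → ℂ) (hg : DifferentiableOn ℂ g (ball (0:ℂ) 1))
    (hg' : ContinuousOn (deriv g) (ball (0:ℂ) 1))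
    (z : ℂ) (hz : z ∈ ball (0:ℂ) 1)
    (B : ℝ → ℝ) (hB : IntervalIntegrable B volume 0 1)
    (hbd : ∀ t ∈ Set.Icc (0:ℝ) 1, ‖z * deriv g ((t:ℂ) * z)‖ ≤ B t) :
    ‖g z - g 0‖ ≤ ∫ t in (0:ℝ)..1, B t := by
  have huicc : Set.uIcc (0:ℝ) 1 = Set.Icc (0:ℝ) 1 := Set.uIcc_of_le zero_le_one
  have hzlt : ‖z‖ < 1 := mem_ball_zero_iff.mp hz
  have hmem : ∀ t ∈ Set.Icc (0:ℝ) 1, ((t:ℂ) * z) ∈ ball (0:ℂ) 1 := by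
    intro t ht
    rw [mem_ball_zero_iff, norm_mul, Complex.norm_real]
    rcases eq_or_lt_of_le (norm_nonneg z) with h | h
    · rw [← h]; simpa using zero_lt_one
    · calc |t| * ‖z‖ ≤ 1 * ‖z‖ := by
            apply mul_le_mul_of_nonneg_right _ (norm_nonneg z)
            rw [abs_le]; exact ⟨by linarith [ht.1], ht.2⟩
        _ < 1 := by simpa using hzlt
  have hder : ∀ t ∈ Set.uIcc (0:ℝ) 1,
      HasDerivAt (fun s : ℝ => g ((s:ℂ) * z)) (z * deriv g ((t:ℂ) * z)) t := by
    intro t ht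
    rw [huicc] at ht
    have hmem' := hmem t ht
    have hgd : HasDerivAt g (deriv g ((t:ℂ) * z)) ((t:ℂ) * z) :=
      ((hg _ hmem').differentiableAt (isOpen_ball.mem_nhds hmem')).hasDerivAt
    have hlin : HasDerivAt (fun s : ℝ => (s:ℂ) * z) z t := by
      simpa using (Complex.ofRealCLM.hasDerivAt (x := t)).mul_const z
    exact hgd.scomp t hlin
  have hcont : ContinuousOn (fun t : ℝ => z * deriv g ((t:ℂ) * z)) (Set.uIcc (0:ℝ) 1) := by
    rw [huicc]
    exact continuousOn_const.mul (hg'.comp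
      ((Complex.continuous_ofReal.mul continuous_const).continuousOn) hmem)
  have hint : IntervalIntegrable (fun t : ℝ => z * deriv g ((t:ℂ) * z)) volume 0 1 :=
    hcont.intervalIntegrable
  have heq := intervalIntegral.integral_eq_sub_of_hasDerivAt hder hint
  simp only [Complex.ofReal_one, Complex.ofReal_zero, one_mul, zero_mul] at heq
  rw [← heq]
  have hae : ∀ᵐ t ∂(volume.restrict (Set.uIoc (0:ℝ) 1)),
      ‖z * deriv g (((t:ℝ):ℂ) * z)‖ ≤ B t := by
    filter_upwards [ae_restrict_mem measurableSet_uIoc] with t ht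
    rw [Set.uIoc_of_le zero_le_one] at ht
    exact hbd t ⟨le_of_lt ht.1, ht.2⟩
  refine le_trans (intervalIntegral.norm_integral_le_abs_of_norm_le hae hB) (le_of_eq ?_)
  apply abs_of_nonneg
  apply intervalIntegral.integral_nonneg zero_le_one
  intro t ht
  exact le_trans (norm_nonneg _) (hbd t ht)

lemma integral_one_sub_rpow (r β : ℝ) (hr0 : 0 ≤ r) (hr1 : r < 1) (hβ : β ≠ 0) :
    ∫ t in (0:ℝ)..1, r * (1 - t*r) ^ (β-1) = (1 - (1-r)^β)/β := by
  have hpos : ∀ t ∈ Set.uIcc (0:ℝ) 1, 0 < 1 - t*r := by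
    intro t ht; rw [Set.uIcc_of_le zero_le_one] at ht
    nlinarith [ht.1, ht.2]
  have hder : ∀ t ∈ Set.uIcc (0:ℝ) 1,
      HasDerivAt (fun t : ℝ => (1 - (1 - t*r)^β)/β) (r * (1 - t*r)^(β-1)) t := by
    intro t ht
    have hu : HasDerivAt (fun t : ℝ => 1 - t*r) (-r) t := by
      simpa using ((hasDerivAt_id t).mul_const r).const_sub 1
    have h2 := (Real.hasDerivAt_rpow_const (p := β) (Or.inl (hpos t ht).ne')).comp t hu
    have h3 := (h2.const_sub 1).div_const β
    refine h3.congr_deriv ?_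
    rw [div_eq_iff hβ]
    ring
  have hcont : ContinuousOn (fun t : ℝ => r * (1 - t*r)^(β-1)) (Set.uIcc (0:ℝ) 1) :=
    continuousOn_const.mul
      ((continuousOn_const.sub (continuousOn_id.mul continuousOn_const)).rpow_const
        (fun t ht => Or.inl (hpos t ht).ne'))
  have hint : IntervalIntegrable (fun t : ℝ => r * (1 - t*r)^(β-1)) volume 0 1 :=
    hcont.intervalIntegrable
  rw [intervalIntegral.integral_eq_sub_of_hasDerivAt hder hint]
  norm_num [Real.one_rpow]

lemma cont_int (r e : ℝ) (hr0 : 0 ≤ r) (hr1 : r < 1) :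
    IntervalIntegrable (fun t : ℝ => r * (1 - t*r)^e) volume 0 1 := by
  have hpos : ∀ t ∈ Set.uIcc (0:ℝ) 1, 0 < 1 - t*r := by
    intro t ht; rw [Set.uIcc_of_le zero_le_one] at ht; nlinarith [ht.1, ht.2]
  exact (continuousOn_const.mul
    ((continuousOn_const.sub (continuousOn_id.mul continuousOn_const)).rpow_const
      (fun t ht => Or.inl (hpos t ht).ne'))).intervalIntegrable

theorem zygmund_value_bound_alpha_between_one_two
    (f : ℂ → ℂ) (α : ℝ) (hα1 : 1 < α) (hα2 : α < 2)
    (hf : DifferentiableOn ℂ f (ball (0:ℂ) 1)) (M : ℝ)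
    (hM : ∀ z ∈ ball (0:ℂ) 1,
      (1 - ‖z‖ ^ 2) ^ α * ‖iteratedDeriv 2 f z‖ ≤ M) :
    ∀ z ∈ ball (0:ℂ) 1,
      ‖f z‖ ≤
        2 / ((α - 1) * (2 - α)) * (‖f 0‖ + ‖deriv f 0‖ + M) := by
  have hfa : AnalyticOnNhd ℂ f (ball (0:ℂ) 1) := hf.analyticOnNhd isOpen_ball
  have hd1' : DifferentiableOn ℂ (deriv f) (ball (0:ℂ) 1) := hfa.deriv.differentiableOn
  have hc1 : ContinuousOn (deriv f) (ball (0:ℂ) 1) := hd1'.continuousOn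
  have hc2 : ContinuousOn (deriv (deriv f)) (ball (0:ℂ) 1) :=
    hfa.deriv.deriv.differentiableOn.continuousOn
  have hM' : ∀ w ∈ ball (0:ℂ) 1, (1 - ‖w‖ ^ 2) ^ α * ‖deriv (deriv f) w‖ ≤ M := by
    intro w hw
    have := hM w hw
    simpa [iteratedDeriv_succ, iteratedDeriv_one] using this
  have hM0 : 0 ≤ M := by
    have h0 := hM' 0 (mem_ball_self one_pos)
    simp [Real.one_rpow] at h0
    exact le_trans (norm_nonneg _) h0
  have hα1' : (0:ℝ) < α - 1 := by linarith
  have hα2' : (0:ℝ) < 2 - α := by linarith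
  -- second derivative bound
  have hd2bound : ∀ w ∈ ball (0:ℂ) 1, ‖deriv (deriv f) w‖ ≤ M * (1 - ‖w‖) ^ (-α) := by
    intro w hw
    have hw1 : ‖w‖ < 1 := mem_ball_zero_iff.mp hw
    have hw0 : (0:ℝ) ≤ ‖w‖ := norm_nonneg w
    have hbase : (0:ℝ) < 1 - ‖w‖ := by linarith
    have hle : (1 - ‖w‖) ^ α ≤ (1 - ‖w‖^2) ^ α := by
      apply Real.rpow_le_rpow (le_of_lt hbase) (by nlinarith) (by linarith)
    have key : ‖deriv (deriv f) w‖ * (1 - ‖w‖) ^ α ≤ M := by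
      calc ‖deriv (deriv f) w‖ * (1 - ‖w‖) ^ α
          ≤ (1 - ‖w‖^2) ^ α * ‖deriv (deriv f) w‖ := by
            rw [mul_comm]
            exact mul_le_mul_of_nonneg_right hle (norm_nonneg _)
        _ ≤ M := hM' w hw
    rw [Real.rpow_neg (le_of_lt hbase), ← div_eq_mul_inv,
      le_div_iff₀ (Real.rpow_pos_of_pos hbase α)]
    exact key
  -- first derivative bound
  have hd1bound : ∀ w ∈ ball (0:ℂ) 1,
      ‖deriv f w‖ ≤ ‖deriv f 0‖ + M / (α-1) * (1 - ‖w‖) ^ (1-α) := by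
    intro w hw
    have hw1 : ‖w‖ < 1 := mem_ball_zero_iff.mp hw
    have hw0 : (0:ℝ) ≤ ‖w‖ := norm_nonneg w
    have hbase : (0:ℝ) < 1 - ‖w‖ := by linarith
    set r := ‖w‖ with hr
    have hBint : IntervalIntegrable (fun t : ℝ => M * (r * (1 - t*r)^((1-α)-1))) volume 0 1 :=
      (cont_int r ((1-α)-1) hw0 hw1).const_mul M
    have hbd : ∀ t ∈ Set.Icc (0:ℝ) 1,
        ‖w * deriv (deriv f) (((t:ℝ):ℂ) * w)‖ ≤ M * (r * (1 - t*r)^((1-α)-1)) := by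
      intro t ht
      have hpos : (0:ℝ) < 1 - t*r := by nlinarith [ht.1, ht.2]
      have hnorm : ‖((t:ℝ):ℂ) * w‖ = t * r := by
        rw [norm_mul, Complex.norm_real, Real.norm_eq_abs, abs_of_nonneg ht.1]
      have hmem : ((t:ℝ):ℂ) * w ∈ ball (0:ℂ) 1 := by
        rw [mem_ball_zero_iff, hnorm]; nlinarith [ht.1, ht.2]
      have h2 := hd2bound _ hmem
      rw [hnorm] at h2
      have hexp : (1-α)-1 = -α := by ring
      rw [norm_mul, hexp]
      calc r * ‖deriv (deriv f) (((t:ℝ):ℂ) * w)‖ ≤ r * (M * (1 - t*r)^(-α)) :=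
            mul_le_mul_of_nonneg_left h2 hw0
        _ = M * (r * (1 - t*r)^(-α)) := by ring
    have key := seg_norm_le (deriv f) hd1' hc2 w hw _ hBint hbd
    have hval : (∫ t in (0:ℝ)..1, M * (r * (1 - t*r)^((1-α)-1)))
        = M * ((1 - (1-r)^(1-α))/(1-α)) := by
      rw [intervalIntegral.integral_const_mul,
        integral_one_sub_rpow r (1-α) hw0 hw1 (by intro h; linarith)]
    rw [hval] at key
    have hX : (1:ℝ) ≤ (1-r)^(1-α) := by
      have := Real.rpow_le_rpow_of_exponent_ge hbase (by linarith) (by linarith : 1-α ≤ 0)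
      simpa using this
    have htri := norm_sub_norm_le (deriv f w) (deriv f 0)
    have hineq : M * ((1 - (1-r)^(1-α))/(1-α)) ≤ M / (α-1) * (1-r)^(1-α) := by
      have e1 : (1 - (1-r)^(1-α))/(1-α) = ((1-r)^(1-α) - 1)/(α-1) := by
        rw [div_eq_div_iff (by intro h; linarith : (1:ℝ)-α ≠ 0) (ne_of_gt hα1')]; ring
      rw [e1, ← mul_div_assoc, div_mul_eq_mul_div, div_le_div_iff₀ hα1' hα1']
      nlinarith [mul_nonneg hM0 hα1'.le]
    linarith
  -- main bound
  intro z hz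
  have hz1 : ‖z‖ < 1 := mem_ball_zero_iff.mp hz
  have hz0 : (0:ℝ) ≤ ‖z‖ := norm_nonneg z
  set r := ‖z‖ with hr
  set a := ‖f 0‖ with ha
  set b := ‖deriv f 0‖ with hb
  have ha0 : 0 ≤ a := norm_nonneg _
  have hb0 : 0 ≤ b := norm_nonneg _
  have hBint : IntervalIntegrable
      (fun t : ℝ => r * b + M/(α-1) * (r * (1 - t*r)^((2-α)-1))) volume 0 1 :=
    intervalIntegrable_const.add ((cont_int r ((2-α)-1) hz0 hz1).const_mul (M/(α-1)))
  have hbd : ∀ t ∈ Set.Icc (0:ℝ) 1,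
      ‖z * deriv f (((t:ℝ):ℂ) * z)‖ ≤ r * b + M/(α-1) * (r * (1 - t*r)^((2-α)-1)) := by
    intro t ht
    have hpos : (0:ℝ) < 1 - t*r := by nlinarith [ht.1, ht.2]
    have hnorm : ‖((t:ℝ):ℂ) * z‖ = t * r := by
      rw [norm_mul, Complex.norm_real, Real.norm_eq_abs, abs_of_nonneg ht.1]
    have hmem : ((t:ℝ):ℂ) * z ∈ ball (0:ℂ) 1 := by
      rw [mem_ball_zero_iff, hnorm]; nlinarith [ht.1, ht.2]
    have h1 := hd1bound _ hmem
    rw [hnorm] at h1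
    have hexp : (2-α)-1 = 1-α := by ring
    rw [norm_mul, hexp]
    calc r * ‖deriv f (((t:ℝ):ℂ) * z)‖
        ≤ r * (b + M/(α-1) * (1 - t*r)^(1-α)) := mul_le_mul_of_nonneg_left h1 hz0
      _ = r * b + M/(α-1) * (r * (1 - t*r)^(1-α)) := by ring
  have key := seg_norm_le f hf hc1 z hz _ hBint hbd
  have hval : (∫ t in (0:ℝ)..1, (r * b + M/(α-1) * (r * (1 - t*r)^((2-α)-1))))
      = r * b + M/(α-1) * ((1 - (1-r)^(2-α))/(2-α)) := by
    rw [intervalIntegral.integral_add intervalIntegrable_const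
        ((cont_int r ((2-α)-1) hz0 hz1).const_mul (M/(α-1))),
      intervalIntegral.integral_const,
      intervalIntegral.integral_const_mul,
      integral_one_sub_rpow r (2-α) hz0 hz1 (by intro h; linarith)]
    simp
  rw [hval] at key
  have htri := norm_sub_norm_le (f z) (f 0)
  have hc : (0:ℝ) < (α-1)*(2-α) := mul_pos hα1' hα2'
  have hstep : ‖f z‖ ≤ a + b + M / ((α-1)*(2-α)) := by
    have h1 : r * b ≤ b := by nlinarith
    have h2 : M/(α-1) * ((1 - (1-r)^(2-α))/(2-α)) ≤ M / ((α-1)*(2-α)) := by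
      have hrp : 0 ≤ (1-r)^(2-α) := Real.rpow_nonneg (by linarith) _
      rw [div_mul_div_comm, div_le_div_iff₀ hc hc]
      nlinarith [mul_nonneg (mul_nonneg hM0 hrp) hc.le]
    linarith
  have hc2' : (α-1)*(2-α) ≤ 2 := by nlinarith
  have hfinal : a + b + M / ((α-1)*(2-α)) ≤ 2 / ((α-1)*(2-α)) * (a + b + M) := by
    rw [div_mul_eq_mul_div, le_div_iff₀ hc]
    have hMc : M / ((α-1)*(2-α)) * ((α-1)*(2-α)) = M := div_mul_cancel₀ M hc.ne'
    nlinarith [mul_nonneg (add_nonneg ha0 hb0) hc.le]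
  linarith
end

section
/- If f is analytic on the unit disc with finite norm ‖f‖_{𝒵_2} = |f(0)| + |f'(0)| + sup_{z∈𝔻} (1-|z|²)² |f''(z)|, then for every z in the unit disc, |f(z)| ≤ 2 ‖f‖_{𝒵_2} · log(2/(1-|z|)). -/
open Metric

private lemma seg_mem {z : ℂ} (hz : ‖z‖ < 1) {t : ℝ} (ht : t ∈ Set.Icc (0:ℝ) 1) :
    t • z ∈ ball (0:ℂ) 1 := by
  rw [mem_ball_zero_iff, norm_smul, Real.norm_eq_abs, abs_of_nonneg ht.1]
  nlinarith [norm_nonneg z, ht.2]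

private lemma seg_norm {z : ℂ} {t : ℝ} (ht : t ∈ Set.Icc (0:ℝ) 1) :
    ‖t • z‖ = t * ‖z‖ := by
  rw [norm_smul, Real.norm_eq_abs, abs_of_nonneg ht.1]

private lemma segment_bound (F : ℂ → ℂ) (hF : DifferentiableOn ℂ F (ball (0:ℂ) 1))
    (z : ℂ) (hz : ‖z‖ < 1) (b B : ℝ → ℝ)
    (hb : ∀ t ∈ Set.Icc (0:ℝ) 1, ‖z‖ * ‖deriv F (t • z)‖ ≤ b t)
    (hB : ∀ t ∈ Set.Icc (0:ℝ) 1, HasDerivAt B (b t) t)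
    (hbc : ContinuousOn b (Set.Icc (0:ℝ) 1)) :
    ‖F z - F 0‖ ≤ B 1 - B 0 := by
  have huIcc : Set.uIcc (0:ℝ) 1 = Set.Icc (0:ℝ) 1 := Set.uIcc_of_le zero_le_one
  have hF' : ContinuousOn (deriv F) (ball (0:ℂ) 1) :=
    ((hF.analyticOnNhd isOpen_ball).deriv.differentiableOn).continuousOn
  have hmem : ∀ t ∈ Set.Icc (0:ℝ) 1, t • z ∈ ball (0:ℂ) 1 := fun t ht => seg_mem hz ht
  have hφ : ∀ t ∈ Set.uIcc (0:ℝ) 1,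
      HasDerivAt (fun t : ℝ => F (t • z)) (z • deriv F (t • z)) t := by
    intro t ht
    rw [huIcc] at ht
    have h1 : HasDerivAt (fun t : ℝ => t • z) z t := by
      simpa using (hasDerivAt_id t).smul_const z
    have h2 : HasDerivAt F (deriv F (t • z)) (t • z) :=
      (hF.differentiableAt (isOpen_ball.mem_nhds (hmem t ht))).hasDerivAt
    exact h2.scomp t h1
  have hint : IntervalIntegrable (fun t : ℝ => z • deriv F (t • z))
      MeasureTheory.volume 0 1 := by
    apply ContinuousOn.intervalIntegrable
    rw [huIcc]
    exact (continuousOn_const (c := z)).smul (hF'.comp (f := fun t : ℝ => t • z)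
      ((continuous_id.smul continuous_const).continuousOn) hmem)
  have key : F z - F 0 = ∫ t in (0:ℝ)..1, z • deriv F (t • z) := by
    have := intervalIntegral.integral_eq_sub_of_hasDerivAt hφ hint
    simpa using this.symm
  have hbint : IntervalIntegrable b MeasureTheory.volume 0 1 := by
    apply ContinuousOn.intervalIntegrable
    rwa [huIcc]
  have hBval : (∫ t in (0:ℝ)..1, b t) = B 1 - B 0 :=
    intervalIntegral.integral_eq_sub_of_hasDerivAt
      (fun t ht => hB t (by rwa [huIcc] at ht)) hbint
  have hb0 : ∀ t ∈ Set.Icc (0:ℝ) 1, 0 ≤ b t := fun t ht =>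
    le_trans (by positivity) (hb t ht)
  have hnn : 0 ≤ ∫ t in (0:ℝ)..1, b t :=
    intervalIntegral.integral_nonneg zero_le_one (fun u hu => hb0 u hu)
  rw [key]
  calc ‖∫ t in (0:ℝ)..1, z • deriv F (t • z)‖ ≤ |∫ t in (0:ℝ)..1, b t| := by
        apply intervalIntegral.norm_integral_le_abs_of_norm_le _ hbint
        filter_upwards [MeasureTheory.ae_restrict_mem measurableSet_uIoc] with t ht
        have ht' : t ∈ Set.Icc (0:ℝ) 1 := by
          rw [Set.uIoc_of_le zero_le_one] at ht; exact ⟨le_of_lt ht.1, ht.2⟩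
        rw [norm_smul]; exact hb t ht'
    _ = B 1 - B 0 := by rw [abs_of_nonneg hnn, hBval]

theorem zygmund_value_bound_alpha_two
    (f : ℂ → ℂ)
    (hf : DifferentiableOn ℂ f (ball (0:ℂ) 1)) (M : ℝ)
    (hM : ∀ z ∈ ball (0:ℂ) 1,
      (1 - ‖z‖ ^ 2) ^ 2 * ‖iteratedDeriv 2 f z‖ ≤ M) :
    ∀ z ∈ ball (0:ℂ) 1,
      ‖f z‖ ≤
        2 * (‖f 0‖ + ‖deriv f 0‖ + M) *
          Real.log (2 / (1 - ‖z‖)) := by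
  have hg : DifferentiableOn ℂ (deriv f) (ball (0:ℂ) 1) :=
    (hf.analyticOnNhd isOpen_ball).deriv.differentiableOn
  have hM0 : 0 ≤ M := le_trans (by positivity) (hM 0 (by simp))
  -- second-derivative bound
  have key : ∀ w ∈ ball (0:ℂ) 1, (1 - ‖w‖)^2 * ‖deriv (deriv f) w‖ ≤ M := by
    intro w hw
    have h2 : iteratedDeriv 2 f w = deriv (deriv f) w := by
      simp [iteratedDeriv_succ, iteratedDeriv_one]
    have hMw := hM w hw
    rw [h2] at hMw
    have hw1 : ‖w‖ < 1 := mem_ball_zero_iff.1 hw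
    nlinarith [norm_nonneg w, norm_nonneg (deriv (deriv f) w), sq_nonneg (1 - ‖w‖),
      mul_nonneg (mul_nonneg (sq_nonneg (1 - ‖w‖)) (norm_nonneg w))
        (mul_nonneg (norm_nonneg w) (norm_nonneg (deriv (deriv f) w)))]
  -- bound for deriv f
  have hgz : ∀ z : ℂ, ‖z‖ < 1 → ‖deriv f z‖ ≤ ‖deriv f 0‖ + (M / (1 - ‖z‖) - M) := by
    intro z hz
    set r := ‖z‖ with hr
    have hr0 : 0 ≤ r := norm_nonneg z
    have hden : ∀ t ∈ Set.Icc (0:ℝ) 1, (0:ℝ) < 1 - t * r := by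
      intro t ht; nlinarith [ht.1, ht.2]
    have hsb := segment_bound (deriv f) hg z hz
      (fun t => M * (r / (1 - t * r)^2)) (fun t => M * (1 - t * r)⁻¹)
      (by
        intro t ht
        have hmem := seg_mem hz ht
        have hk := key _ hmem
        rw [seg_norm ht] at hk
        have hd := hden t ht
        have h1 : ‖deriv (deriv f) (t • z)‖ ≤ M / (1 - t * r)^2 := by
          rw [le_div_iff₀ (by positivity)]; linarith [hk]
        calc r * ‖deriv (deriv f) (t • z)‖ ≤ r * (M / (1 - t * r)^2) :=
              mul_le_mul_of_nonneg_left h1 hr0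
          _ = M * (r / (1 - t * r)^2) := by ring
      )
      (by
        intro t ht
        have hd := hden t ht
        have h1 : HasDerivAt (fun t : ℝ => 1 - t * r) (-r) t := by
          simpa using ((hasDerivAt_id t).mul_const r).const_sub 1
        have h2 := (h1.inv (ne_of_gt hd)).const_mul M
        refine h2.congr_deriv ?_
        ring
      )
      (by
        apply continuousOn_const.mul
        apply ContinuousOn.div continuousOn_const
        · exact ((continuousOn_const.sub ((continuousOn_id).mul continuousOn_const)).pow 2)
        · intro t ht; exact pow_ne_zero 2 (ne_of_gt (hden t ht))
      )
    have : ‖deriv f z - deriv f 0‖ ≤ M * (1 - 1 * r)⁻¹ - M * (1 - 0 * r)⁻¹ := hsb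
    have htri : ‖deriv f z‖ - ‖deriv f 0‖ ≤ ‖deriv f z - deriv f 0‖ :=
      norm_sub_norm_le _ _
    have heq : M * (1 - 1 * r)⁻¹ - M * (1 - 0 * r)⁻¹ = M / (1 - r) - M := by
      field_simp
      ring
    linarith
  -- bound for f
  intro z hz
  rw [mem_ball_zero_iff] at hz
  set r := ‖z‖ with hr
  have hr0 : 0 ≤ r := norm_nonneg z
  set C := ‖deriv f 0‖ with hC
  have hC0 : 0 ≤ C := norm_nonneg _
  have hden : ∀ t ∈ Set.Icc (0:ℝ) 1, (0:ℝ) < 1 - t * r := by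
    intro t ht; nlinarith [ht.1, ht.2]
  have hsb := segment_bound f hf z hz
    (fun t => r * (C - M) + M * (r / (1 - t * r)))
    (fun t => r * (C - M) * t + M * (-Real.log (1 - t * r)))
    (by
      intro t ht
      have hmem := seg_mem hz ht
      have hgb := hgz (t • z) (mem_ball_zero_iff.1 hmem)
      rw [seg_norm ht] at hgb
      have hd := hden t ht
      calc r * ‖deriv f (t • z)‖ ≤ r * (C + (M / (1 - t * r) - M)) :=
            mul_le_mul_of_nonneg_left hgb hr0
        _ = r * (C - M) + M * (r / (1 - t * r)) := by field_simp; ring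
    )
    (by
      intro t ht
      have hd := hden t ht
      have h1 : HasDerivAt (fun t : ℝ => 1 - t * r) (-r) t := by
        simpa using ((hasDerivAt_id t).mul_const r).const_sub 1
      have h2 : HasDerivAt (fun t : ℝ => Real.log (1 - t * r))
          ((1 - t * r)⁻¹ * (-r)) t :=
        by have := (Real.hasDerivAt_log (ne_of_gt hd)).comp t h1; exact this
      have h3 := ((hasDerivAt_id t).const_mul (r * (C - M))).add (h2.neg.const_mul M)
      refine h3.congr_deriv ?_
      ring
    )
    (by
      apply continuousOn_const.add
      apply continuousOn_const.mul
      apply ContinuousOn.div continuousOn_const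
      · exact continuousOn_const.sub ((continuousOn_id).mul continuousOn_const)
      · intro t ht; exact ne_of_gt (hden t ht)
    )
  have htri : ‖f z‖ - ‖f 0‖ ≤ ‖f z - f 0‖ := norm_sub_norm_le _ _
  have heq : (r * (C - M) * 1 + M * (-Real.log (1 - 1 * r))) -
      (r * (C - M) * 0 + M * (-Real.log (1 - 0 * r))) =
      r * (C - M) - M * Real.log (1 - r) := by
    simp
    ring
  rw [heq] at hsb
  -- final arithmetic
  have hd : (0:ℝ) < 1 - r := by linarith
  have hlog : Real.log (2 / (1 - r)) = Real.log 2 - Real.log (1 - r) :=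
    Real.log_div two_ne_zero (ne_of_gt hd)
  have hL : Real.log (1 - r) ≤ 0 := Real.log_nonpos (by linarith) (by linarith)
  have hlog2 : (1:ℝ)/2 ≤ Real.log 2 := by
    have := Real.log_two_gt_d9
    linarith
  have hf0 : 0 ≤ ‖f 0‖ := norm_nonneg _
  rw [hlog]
  nlinarith [mul_nonneg (mul_nonneg hM0 hr0) (neg_nonneg.2 hL),
    mul_nonneg hM0 (neg_nonneg.2 hL),
    mul_nonneg hC0 (by linarith : (0:ℝ) ≤ 1 - r),
    mul_nonneg (by linarith : (0:ℝ) ≤ ‖f 0‖ + C + M) (by linarith : (0:ℝ) ≤ 2 * Real.log 2 - 1),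
    mul_nonneg (by linarith : (0:ℝ) ≤ 2 * (‖f 0‖ + C) + M) (neg_nonneg.2 hL)]
end

section
/- For α > 0, a ∈ 𝔻, and nonnegative integer n, define k_a(z) = (α+n)·(1-|a|²)²/(1-ā z)^α − 2α·(1-|a|²)³/(1-ā z)^{α+1} + (α(α+1)/(α+n+1))·(1-|a|²)⁴/(1-ā z)^{α+2}. Then the n-th and (n+1)-st derivatives of k_a vanish at z = a: k_a^{(n)}(a) = 0 and k_a^{(n+1)}(a) = 0. -/
open Metric

noncomputable def kTest (α : ℝ) (n : ℕ) (a z : ℂ) : ℂ :=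
  ((α + n : ℝ) : ℂ) * (((1 - ‖a‖ ^ 2) ^ 2 : ℝ) : ℂ) *
      (1 - (starRingEnd ℂ) a * z) ^ (-(α : ℂ))
    - 2 * (α : ℂ) * (((1 - ‖a‖ ^ 2) ^ 3 : ℝ) : ℂ) *
      (1 - (starRingEnd ℂ) a * z) ^ (-((α : ℂ) + 1))
    + ((α * (α + 1) / (α + n + 1) : ℝ) : ℂ) * (((1 - ‖a‖ ^ 2) ^ 4 : ℝ) : ℂ) *
      (1 - (starRingEnd ℂ) a * z) ^ (-((α : ℂ) + 2))

noncomputable def kIter (α : ℝ) (n m : ℕ) (a z : ℂ) : ℂ :=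
  ((∏ i ∈ Finset.range m, ((α : ℂ) + i)) * (((α + n : ℝ) : ℂ) *
      (((1 - ‖a‖ ^ 2) ^ 2 : ℝ) : ℂ)) * (starRingEnd ℂ) a ^ m) *
      (1 - (starRingEnd ℂ) a * z) ^ (-(α : ℂ) - m)
    - ((∏ i ∈ Finset.range m, ((α : ℂ) + 1 + i)) * (2 * (α : ℂ) *
      (((1 - ‖a‖ ^ 2) ^ 3 : ℝ) : ℂ)) * (starRingEnd ℂ) a ^ m) *
      (1 - (starRingEnd ℂ) a * z) ^ (-((α : ℂ) + 1) - m)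
    + ((∏ i ∈ Finset.range m, ((α : ℂ) + 2 + i)) * (((α * (α + 1) / (α + n + 1) : ℝ) : ℂ) *
      (((1 - ‖a‖ ^ 2) ^ 4 : ℝ) : ℂ)) * (starRingEnd ℂ) a ^ m) *
      (1 - (starRingEnd ℂ) a * z) ^ (-((α : ℂ) + 2) - m)

lemma prod_shift (β : ℂ) (m : ℕ) :
    β * ∏ i ∈ Finset.range m, (β + 1 + i) =
      (∏ i ∈ Finset.range m, (β + i)) * (β + m) := by
  induction m with
  | zero => simp
  | succ k ih =>
    rw [Finset.prod_range_succ, Finset.prod_range_succ, ← mul_assoc, ih]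
    push_cast
    ring

lemma iteratedDeriv_kTest (α : ℝ) (n : ℕ) (a : ℂ) (m : ℕ) :
    ∀ z : ℂ, 0 < (1 - (starRingEnd ℂ) a * z).re →
      iteratedDeriv m (kTest α n a) z = kIter α n m a z := by
  have hU : IsOpen {z : ℂ | 0 < (1 - (starRingEnd ℂ) a * z).re} := by
    apply isOpen_lt continuous_const
    exact Complex.continuous_re.comp (by fun_prop)
  induction m with
  | zero =>
    intro z hz
    simp only [iteratedDeriv_zero, kTest, kIter, Finset.prod_range_zero, pow_zero,
      Nat.cast_zero, sub_zero, one_mul, mul_one]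
  | succ m ih =>
    intro z hz
    rw [iteratedDeriv_succ]
    have heq : deriv (iteratedDeriv m (kTest α n a)) z = deriv (kIter α n m a) z := by
      apply Filter.EventuallyEq.deriv_eq
      filter_upwards [hU.mem_nhds hz] with w hw using ih w hw
    rw [heq]
    -- now compute deriv of kIter
    have hbase : HasDerivAt (fun w : ℂ => 1 - (starRingEnd ℂ) a * w) (-((starRingEnd ℂ) a)) z := by
      simpa using ((hasDerivAt_id z).const_mul ((starRingEnd ℂ) a)).const_sub 1
    have hsp : (1 - (starRingEnd ℂ) a * z) ∈ Complex.slitPlane := Or.inl hz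
    have h1 := (hbase.cpow_const (c := -(α : ℂ) - m) hsp).const_mul
      ((∏ i ∈ Finset.range m, ((α : ℂ) + i)) * (((α + n : ℝ) : ℂ) *
        (((1 - ‖a‖ ^ 2) ^ 2 : ℝ) : ℂ)) * (starRingEnd ℂ) a ^ m)
    have h2 := (hbase.cpow_const (c := -((α : ℂ) + 1) - m) hsp).const_mul
      ((∏ i ∈ Finset.range m, ((α : ℂ) + 1 + i)) * (2 * (α : ℂ) *
        (((1 - ‖a‖ ^ 2) ^ 3 : ℝ) : ℂ)) * (starRingEnd ℂ) a ^ m)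
    have h3 := (hbase.cpow_const (c := -((α : ℂ) + 2) - m) hsp).const_mul
      ((∏ i ∈ Finset.range m, ((α : ℂ) + 2 + i)) * (((α * (α + 1) / (α + n + 1) : ℝ) : ℂ) *
        (((1 - ‖a‖ ^ 2) ^ 4 : ℝ) : ℂ)) * (starRingEnd ℂ) a ^ m)
    have hD : HasDerivAt (kIter α n m a) _ z := (h1.sub h2).add h3
    rw [hD.deriv, kIter]
    have e1 : (-(α : ℂ) - m) - 1 = -(α : ℂ) - (m + 1 : ℕ) := by push_cast; ring
    have e2 : (-((α : ℂ) + 1) - m) - 1 = -((α : ℂ) + 1) - (m + 1 : ℕ) := by push_cast; ring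
    have e3 : (-((α : ℂ) + 2) - m) - 1 = -((α : ℂ) + 2) - (m + 1 : ℕ) := by push_cast; ring
    rw [e1, e2, e3, Finset.prod_range_succ, Finset.prod_range_succ, Finset.prod_range_succ]
    push_cast
    ring

theorem kTest_derivs_vanish (α : ℝ) (hα : 0 < α) (n : ℕ) (a : ℂ) (ha : a ∈ ball (0:ℂ) 1) :
    iteratedDeriv n (kTest α n a) a = 0 ∧ iteratedDeriv (n + 1) (kTest α n a) a = 0 := by
  have ha1 : ‖a‖ < 1 := by simpa [Complex.norm_def] using mem_ball_zero_iff.mp ha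
  set s : ℝ := 1 - ‖a‖ ^ 2 with hs
  have hspos : 0 < s := by
    have : ‖a‖ ^ 2 < 1 := by
      have := norm_nonneg a
      nlinarith
    simpa [hs] using this
  have hbase : (1 : ℂ) - (starRingEnd ℂ) a * a = (s : ℂ) := by
    have hca : (starRingEnd ℂ) a * a = ((‖a‖ ^ 2 : ℝ) : ℂ) := by
      rw [← Complex.normSq_eq_conj_mul_self]
      norm_cast
      exact (Complex.sq_norm a).symm
    rw [hca, hs]
    push_cast
    ring
  have hre : 0 < ((1 : ℂ) - (starRingEnd ℂ) a * a).re := by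
    rw [hbase]; simpa using hspos
  have hs0 : (s : ℂ) ≠ 0 := by exact_mod_cast hspos.ne'
  -- combining real power coefficients into cpow
  have key : ∀ (k : ℕ) (e : ℂ), ((s ^ k : ℝ) : ℂ) * (s : ℂ) ^ e = (s : ℂ) ^ ((k : ℂ) + e) := by
    intro k e
    rw [Complex.cpow_add _ _ hs0, Complex.cpow_natCast]
    push_cast
    ring
  -- nonzero denominators
  have hαne : (α : ℂ) ≠ 0 := by exact_mod_cast hα.ne'
  have hα1ne : (α : ℂ) + 1 ≠ 0 := by
    have : ((α + 1 : ℝ) : ℂ) ≠ 0 := by exact_mod_cast (by linarith : (0:ℝ) < α + 1).ne'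
    push_cast at this; exact this
  have hαn1ne : (α : ℂ) + n + 1 ≠ 0 := by
    have h0 : (0:ℝ) < α + n + 1 := by positivity
    have : ((α + n + 1 : ℝ) : ℂ) ≠ 0 := by exact_mod_cast h0.ne'
    push_cast at this; exact this
  -- general computation of kIter at z = a
  have hval : ∀ m : ℕ, kIter α n m a a =
      ((∏ i ∈ Finset.range m, ((α : ℂ) + i)) * ((α : ℂ) + n)
        - (∏ i ∈ Finset.range m, ((α : ℂ) + 1 + i)) * (2 * (α : ℂ))
        + (∏ i ∈ Finset.range m, ((α : ℂ) + 2 + i)) *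
            ((α : ℂ) * ((α : ℂ) + 1) / ((α : ℂ) + n + 1))) *
        ((starRingEnd ℂ) a ^ m * (s : ℂ) ^ ((2 : ℂ) - (α : ℂ) - m)) := by
    intro m
    rw [kIter, hbase]
    have t1 : (((s ^ 2 : ℝ)) : ℂ) * (s : ℂ) ^ (-(α : ℂ) - m) =
        (s : ℂ) ^ ((2 : ℂ) - (α : ℂ) - m) := by
      rw [key 2 (-(α : ℂ) - m)]; norm_num; ring_nf
    have t2 : (((s ^ 3 : ℝ)) : ℂ) * (s : ℂ) ^ (-((α : ℂ) + 1) - m) =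
        (s : ℂ) ^ ((2 : ℂ) - (α : ℂ) - m) := by
      rw [key 3 (-((α : ℂ) + 1) - m)]; norm_num; ring_nf
    have t3 : (((s ^ 4 : ℝ)) : ℂ) * (s : ℂ) ^ (-((α : ℂ) + 2) - m) =
        (s : ℂ) ^ ((2 : ℂ) - (α : ℂ) - m) := by
      rw [key 4 (-((α : ℂ) + 2) - m)]; norm_num; ring_nf
    calc ((∏ i ∈ Finset.range m, ((α : ℂ) + i)) * (((α + n : ℝ) : ℂ) *
      (((s ^ 2 : ℝ)) : ℂ)) * (starRingEnd ℂ) a ^ m) * (s : ℂ) ^ (-(α : ℂ) - m)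
    - ((∏ i ∈ Finset.range m, ((α : ℂ) + 1 + i)) * (2 * (α : ℂ) *
      (((s ^ 3 : ℝ)) : ℂ)) * (starRingEnd ℂ) a ^ m) * (s : ℂ) ^ (-((α : ℂ) + 1) - m)
    + ((∏ i ∈ Finset.range m, ((α : ℂ) + 2 + i)) * (((α * (α + 1) / (α + n + 1) : ℝ) : ℂ) *
      (((s ^ 4 : ℝ)) : ℂ)) * (starRingEnd ℂ) a ^ m) * (s : ℂ) ^ (-((α : ℂ) + 2) - m)
        = ((∏ i ∈ Finset.range m, ((α : ℂ) + i)) * (((α + n : ℝ) : ℂ)) *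
            (starRingEnd ℂ) a ^ m) * ((((s ^ 2 : ℝ)) : ℂ) * (s : ℂ) ^ (-(α : ℂ) - m))
          - ((∏ i ∈ Finset.range m, ((α : ℂ) + 1 + i)) * (2 * (α : ℂ)) *
            (starRingEnd ℂ) a ^ m) * ((((s ^ 3 : ℝ)) : ℂ) * (s : ℂ) ^ (-((α : ℂ) + 1) - m))
          + ((∏ i ∈ Finset.range m, ((α : ℂ) + 2 + i)) *
            (((α * (α + 1) / (α + n + 1) : ℝ) : ℂ)) *
            (starRingEnd ℂ) a ^ m) * ((((s ^ 4 : ℝ)) : ℂ) * (s : ℂ) ^ (-((α : ℂ) + 2) - m)) := by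
            ring
    _ = _ := by rw [t1, t2, t3]; push_cast; ring
  have hu : ((α : ℂ) + n + 1) * ((α : ℂ) + n + 1)⁻¹ = 1 := mul_inv_cancel₀ hαn1ne
  have hprod : ∀ m : ℕ, ∏ i ∈ Finset.range m, ((α : ℂ) + 1 + 1 + (i : ℂ)) =
      ∏ i ∈ Finset.range m, ((α : ℂ) + 2 + (i : ℂ)) :=
    fun m => Finset.prod_congr rfl fun i _ => by ring
  constructor
  · rw [iteratedDeriv_kTest α n a n a hre, hval n]
    have h1 := prod_shift (α : ℂ) n
    have h2 := prod_shift ((α : ℂ) + 1) n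
    rw [hprod] at h2
    apply mul_eq_zero_of_left
    rw [div_eq_mul_inv]
    linear_combination (-1 : ℂ) * h1 + ((α : ℂ) * ((α : ℂ) + n + 1)⁻¹) * h2 +
      ((α : ℂ) * ∏ i ∈ Finset.range n, ((α : ℂ) + 1 + i)) * hu
  · rw [iteratedDeriv_kTest α n a (n + 1) a hre, hval (n + 1)]
    have h1 := prod_shift (α : ℂ) (n + 1)
    have h2 := prod_shift ((α : ℂ) + 1) (n + 1)
    rw [hprod] at h2
    push_cast at h1 h2
    apply mul_eq_zero_of_left
    rw [div_eq_mul_inv]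
    linear_combination (-(((α : ℂ) + n) * ((α : ℂ) + n + 1)⁻¹)) * h1 +
      ((α : ℂ) * ((α : ℂ) + n + 1)⁻¹) * h2 +
      (2 * (α : ℂ) * (∏ i ∈ Finset.range (n + 1), ((α : ℂ) + 1 + i)) -
        ((α : ℂ) + n) * ∏ i ∈ Finset.range (n + 1), ((α : ℂ) + i)) * hu
end

section
/- For α > 0, a ∈ 𝔻, and nonnegative integer n, the function k_a(z) = (α+n)·(1-|a|²)²/(1-ā z)^α − 2α·(1-|a|²)³/(1-ā z)^{α+1} + (α(α+1)/(α+n+1))·(1-|a|²)⁴/(1-ā z)^{α+2} satisfies k_a^{(n+2)}(a) = 2α(α+1)⋯(α+n) · ā^{n+2}/(1-|a|²)^{α+n}. -/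
open Metric

lemma base_slit {a z : ℂ} (ha : a ∈ ball (0:ℂ) 1) (hz : z ∈ ball (0:ℂ) 1) :
    (1 - (starRingEnd ℂ) a * z) ∈ Complex.slitPlane := by
  left
  have ha' : ‖a‖ < 1 := by simpa using mem_ball_zero_iff.mp ha
  have hz' : ‖z‖ < 1 := by simpa using mem_ball_zero_iff.mp hz
  have habs : ‖(starRingEnd ℂ) a * z‖ < 1 := by
    rw [norm_mul, Complex.norm_conj]
    have h0 : (0:ℝ) ≤ ‖a‖ := norm_nonneg a
    have h1 : (0:ℝ) ≤ ‖z‖ := norm_nonneg z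
    nlinarith
  have hre : ((starRingEnd ℂ) a * z).re ≤ ‖(starRingEnd ℂ) a * z‖ :=
    Complex.re_le_norm _
  simp only [Complex.sub_re, Complex.one_re]
  linarith

lemma hasDerivAt_g (a : ℂ) (ha : a ∈ ball (0:ℂ) 1) (β : ℂ) {z : ℂ} (hz : z ∈ ball (0:ℂ) 1) :
    HasDerivAt (fun w => (1 - (starRingEnd ℂ) a * w) ^ β)
      (-β * (starRingEnd ℂ) a * (1 - (starRingEnd ℂ) a * z) ^ (β - 1)) z := by
  have hb : HasDerivAt (fun w : ℂ => 1 - (starRingEnd ℂ) a * w) (-(starRingEnd ℂ) a) z := by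
    simpa using ((hasDerivAt_id z).const_mul ((starRingEnd ℂ) a)).const_sub 1
  have := hb.cpow_const (base_slit ha hz) (c := β)
  convert this using 1
  ring

lemma iter_k (α : ℝ) (n : ℕ) (a : ℂ) (ha : a ∈ ball (0:ℂ) 1) (m : ℕ) :
    ∀ z ∈ ball (0:ℂ) 1,
      iteratedDeriv m (kTest α n a) z =
        ((α + n : ℝ) : ℂ) * (((1 - ‖a‖ ^ 2) ^ 2 : ℝ) : ℂ) *
            (∏ j ∈ Finset.range m, ((α : ℂ) + j)) * ((starRingEnd ℂ) a) ^ m *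
            (1 - (starRingEnd ℂ) a * z) ^ (-(α : ℂ) - m)
        - 2 * (α : ℂ) * (((1 - ‖a‖ ^ 2) ^ 3 : ℝ) : ℂ) *
            (∏ j ∈ Finset.range m, ((α : ℂ) + 1 + j)) * ((starRingEnd ℂ) a) ^ m *
            (1 - (starRingEnd ℂ) a * z) ^ (-((α : ℂ) + 1) - m)
        + ((α * (α + 1) / (α + n + 1) : ℝ) : ℂ) * (((1 - ‖a‖ ^ 2) ^ 4 : ℝ) : ℂ) *
            (∏ j ∈ Finset.range m, ((α : ℂ) + 2 + j)) * ((starRingEnd ℂ) a) ^ m *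
            (1 - (starRingEnd ℂ) a * z) ^ (-((α : ℂ) + 2) - m) := by
  induction m with
  | zero =>
    intro z hz
    simp [kTest]
  | succ m ih =>
    intro z hz
    rw [iteratedDeriv_succ]
    have hEq : iteratedDeriv m (kTest α n a) =ᶠ[nhds z]
        fun w => ((α + n : ℝ) : ℂ) * (((1 - ‖a‖ ^ 2) ^ 2 : ℝ) : ℂ) *
            (∏ j ∈ Finset.range m, ((α : ℂ) + j)) * ((starRingEnd ℂ) a) ^ m *
            (1 - (starRingEnd ℂ) a * w) ^ (-(α : ℂ) - m)
        - 2 * (α : ℂ) * (((1 - ‖a‖ ^ 2) ^ 3 : ℝ) : ℂ) *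
            (∏ j ∈ Finset.range m, ((α : ℂ) + 1 + j)) * ((starRingEnd ℂ) a) ^ m *
            (1 - (starRingEnd ℂ) a * w) ^ (-((α : ℂ) + 1) - m)
        + ((α * (α + 1) / (α + n + 1) : ℝ) : ℂ) * (((1 - ‖a‖ ^ 2) ^ 4 : ℝ) : ℂ) *
            (∏ j ∈ Finset.range m, ((α : ℂ) + 2 + j)) * ((starRingEnd ℂ) a) ^ m *
            (1 - (starRingEnd ℂ) a * w) ^ (-((α : ℂ) + 2) - m) :=
      Filter.eventuallyEq_of_mem (isOpen_ball.mem_nhds hz) ih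
    rw [hEq.deriv_eq]
    have hd1 := (hasDerivAt_g a ha (-(α : ℂ) - m) hz).const_mul
      (((α + n : ℝ) : ℂ) * (((1 - ‖a‖ ^ 2) ^ 2 : ℝ) : ℂ) *
        (∏ j ∈ Finset.range m, ((α : ℂ) + j)) * ((starRingEnd ℂ) a) ^ m)
    have hd2 := (hasDerivAt_g a ha (-((α : ℂ) + 1) - m) hz).const_mul
      (2 * (α : ℂ) * (((1 - ‖a‖ ^ 2) ^ 3 : ℝ) : ℂ) *
        (∏ j ∈ Finset.range m, ((α : ℂ) + 1 + j)) * ((starRingEnd ℂ) a) ^ m)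
    have hd3 := (hasDerivAt_g a ha (-((α : ℂ) + 2) - m) hz).const_mul
      (((α * (α + 1) / (α + n + 1) : ℝ) : ℂ) * (((1 - ‖a‖ ^ 2) ^ 4 : ℝ) : ℂ) *
        (∏ j ∈ Finset.range m, ((α : ℂ) + 2 + j)) * ((starRingEnd ℂ) a) ^ m)
    erw [((hd1.sub hd2).add hd3).deriv]
    have e1 : (-(α : ℂ) - m) - 1 = -(α : ℂ) - (m + 1 : ℕ) := by push_cast; ring
    have e2 : (-((α : ℂ) + 1) - m) - 1 = -((α : ℂ) + 1) - (m + 1 : ℕ) := by push_cast; ring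
    have e3 : (-((α : ℂ) + 2) - m) - 1 = -((α : ℂ) + 2) - (m + 1 : ℕ) := by push_cast; ring
    rw [e1, e2, e3, Finset.prod_range_succ, Finset.prod_range_succ, Finset.prod_range_succ]
    push_cast
    ring

lemma shift_prod (c : ℂ) (m : ℕ) :
    c * ∏ j ∈ Finset.range m, (c + 1 + j) = ∏ j ∈ Finset.range (m + 1), (c + j) := by
  rw [Finset.prod_range_succ' (fun j => c + (j : ℂ)) m]
  rw [show (∏ j ∈ Finset.range m, (c + ((j : ℕ) + 1 : ℕ))) =
      ∏ j ∈ Finset.range m, (c + 1 + j) from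
    Finset.prod_congr rfl fun j _ => by push_cast; ring]
  push_cast
  ring

lemma combo (c : ℂ) (n : ℕ) (hc : c ≠ 0) (hc1 : c + 1 ≠ 0) (hcn : c + n + 1 ≠ 0) :
    (c + n) * (∏ j ∈ Finset.range (n + 2), (c + j))
      - 2 * c * (∏ j ∈ Finset.range (n + 2), (c + 1 + j))
      + (c * (c + 1) / (c + n + 1)) * (∏ j ∈ Finset.range (n + 2), (c + 2 + j))
    = 2 * ∏ j ∈ Finset.range (n + 1), (c + j) := by
  set Q := ∏ j ∈ Finset.range (n + 1), (c + j) with hQ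
  have h1 : ∏ j ∈ Finset.range (n + 2), (c + j) = Q * (c + n + 1) := by
    rw [Finset.prod_range_succ]; push_cast; ring
  have h2 : c * ∏ j ∈ Finset.range (n + 2), (c + 1 + j) = Q * (c + n + 1) * (c + n + 2) := by
    rw [shift_prod c (n + 2), Finset.prod_range_succ, h1]; push_cast; ring
  have h3 : c * ((c + 1) * ∏ j ∈ Finset.range (n + 2), (c + 2 + j))
      = Q * (c + n + 1) * (c + n + 2) * (c + n + 3) := by
    have hs := shift_prod (c + 1) (n + 2)
    rw [show (∏ j ∈ Finset.range (n + 2), (c + 1 + 1 + (j:ℂ))) =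
        ∏ j ∈ Finset.range (n + 2), (c + 2 + j) from
      Finset.prod_congr rfl fun j _ => by ring] at hs
    rw [hs, shift_prod c (n + 3), Finset.prod_range_succ, Finset.prod_range_succ, h1]
    push_cast; ring
  field_simp
  linear_combination (c + n) * (c + n + 1) * h1 - 2 * (c + n + 1) * h2 + h3

theorem kTest_higher_deriv (α : ℝ) (hα : 0 < α) (n : ℕ) (a : ℂ) (ha : a ∈ ball (0:ℂ) 1) :
    iteratedDeriv (n + 2) (kTest α n a) a =
      2 * (∏ j ∈ Finset.range (n + 1), ((α : ℂ) + j)) * ((starRingEnd ℂ) a) ^ (n + 2) /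
        (((1 - ‖a‖ ^ 2) ^ (α + n) : ℝ) : ℂ) := by
  have ha' : ‖a‖ < 1 := by simpa using mem_ball_zero_iff.mp ha
  set u : ℝ := 1 - ‖a‖ ^ 2 with hu
  have hu0 : 0 < u := by
    have h0 : (0:ℝ) ≤ ‖a‖ := norm_nonneg a
    nlinarith
  have hbase : 1 - (starRingEnd ℂ) a * a = ((u : ℝ) : ℂ) := by
    rw [mul_comm, Complex.mul_conj, ← Complex.sq_norm, hu]
    push_cast
    ring
  have key := iter_k α n a ha (n + 2) a ha
  rw [hbase] at key
  -- rewrite the three cpow's as real rpow's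
  have cp : ∀ x : ℝ, ((u:ℝ):ℂ) ^ ((x:ℝ):ℂ) = ((u ^ x : ℝ) : ℂ) :=
    fun x => (Complex.ofReal_cpow hu0.le x).symm
  have e1 : (-(α : ℂ) - ((n + 2 : ℕ) : ℂ)) = ((-α - (n + 2 : ℕ) : ℝ) : ℂ) := by push_cast; ring
  have e2 : (-((α : ℂ) + 1) - ((n + 2 : ℕ) : ℂ)) = ((-(α + 1) - (n + 2 : ℕ) : ℝ) : ℂ) := by
    push_cast; ring
  have e3 : (-((α : ℂ) + 2) - ((n + 2 : ℕ) : ℂ)) = ((-(α + 2) - (n + 2 : ℕ) : ℝ) : ℂ) := by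
    push_cast; ring
  rw [e1, e2, e3, cp, cp, cp] at key
  -- real rpow arithmetic
  have m1 : (((1 - ‖a‖ ^ 2) ^ 2 : ℝ) : ℂ) * ((u ^ (-α - ((n + 2 : ℕ) : ℝ)) : ℝ) : ℂ) *
      ((u ^ (α + (n : ℝ)) : ℝ) : ℂ) = 1 := by
    rw [← hu, ← Complex.ofReal_mul, ← Complex.ofReal_mul, ← Real.rpow_natCast u 2,
      ← Real.rpow_add hu0, ← Real.rpow_add hu0,
      show ((2 : ℕ) : ℝ) + (-α - ((n + 2 : ℕ) : ℝ)) + (α + (n : ℝ)) = 0 by push_cast; ring,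
      Real.rpow_zero, Complex.ofReal_one]
  have m2 : (((1 - ‖a‖ ^ 2) ^ 3 : ℝ) : ℂ) * ((u ^ (-(α + 1) - ((n + 2 : ℕ) : ℝ)) : ℝ) : ℂ) *
      ((u ^ (α + (n : ℝ)) : ℝ) : ℂ) = 1 := by
    rw [← hu, ← Complex.ofReal_mul, ← Complex.ofReal_mul, ← Real.rpow_natCast u 3,
      ← Real.rpow_add hu0, ← Real.rpow_add hu0,
      show ((3 : ℕ) : ℝ) + (-(α + 1) - ((n + 2 : ℕ) : ℝ)) + (α + (n : ℝ)) = 0 by push_cast; ring,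
      Real.rpow_zero, Complex.ofReal_one]
  have m3 : (((1 - ‖a‖ ^ 2) ^ 4 : ℝ) : ℂ) * ((u ^ (-(α + 2) - ((n + 2 : ℕ) : ℝ)) : ℝ) : ℂ) *
      ((u ^ (α + (n : ℝ)) : ℝ) : ℂ) = 1 := by
    rw [← hu, ← Complex.ofReal_mul, ← Complex.ofReal_mul, ← Real.rpow_natCast u 4,
      ← Real.rpow_add hu0, ← Real.rpow_add hu0,
      show ((4 : ℕ) : ℝ) + (-(α + 2) - ((n + 2 : ℕ) : ℝ)) + (α + (n : ℝ)) = 0 by push_cast; ring,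
      Real.rpow_zero, Complex.ofReal_one]
  have hne : ((u ^ (α + (n : ℝ)) : ℝ) : ℂ) ≠ 0 := by
    simp only [ne_eq, Complex.ofReal_eq_zero]
    exact (Real.rpow_pos_of_pos hu0 _).ne'
  have hc : (α : ℂ) ≠ 0 := by
    simp only [ne_eq, Complex.ofReal_eq_zero]; exact hα.ne'
  have hc1 : (α : ℂ) + 1 ≠ 0 := by
    rw [show ((α : ℂ) + 1) = ((α + 1 : ℝ) : ℂ) by push_cast; ring]
    simp only [ne_eq, Complex.ofReal_eq_zero]; positivity
  have hcn : (α : ℂ) + n + 1 ≠ 0 := by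
    rw [show ((α : ℂ) + n + 1) = ((α + n + 1 : ℝ) : ℂ) by push_cast; ring]
    simp only [ne_eq, Complex.ofReal_eq_zero]; positivity
  have hcombo := combo (α : ℂ) n hc hc1 hcn
  rw [key, eq_div_iff hne]
  push_cast at hcombo m1 m2 m3 ⊢
  linear_combination ((starRingEnd ℂ) a) ^ (n + 2) * hcombo +
    (((α : ℂ) + n) * (∏ j ∈ Finset.range (n + 2), ((α : ℂ) + j)) *
      ((starRingEnd ℂ) a) ^ (n + 2)) * m1 -
    (2 * (α : ℂ) * (∏ j ∈ Finset.range (n + 2), ((α : ℂ) + 1 + j)) *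
      ((starRingEnd ℂ) a) ^ (n + 2)) * m2 +
    (((α : ℂ) * ((α : ℂ) + 1) / ((α : ℂ) + n + 1)) *
      (∏ j ∈ Finset.range (n + 2), ((α : ℂ) + 2 + j)) *
      ((starRingEnd ℂ) a) ^ (n + 2)) * m3
end
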